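/- Under the setup T = H V_k V_kᵀ L⁺ with k ≤ rank(L) and σ_k > 0, if τ ≥ 0 and ε ≥ 0 satisfy ‖Hx‖² ≤ τ‖Lx‖² + ε‖x‖² for all x, then the operator norm of T satisfies ‖T‖² ≤ τ + ε σ_k^{−2}, where σ_k is the k-th largest singular value of L. -/

import Mathlib

open Matrix

noncomputable def enorm {n : ℕ} (x : Fin n → ℝ) : ℝ := Real.sqrt (∑ i, x i ^ 2)

noncomputable def opNorm {m n : ℕ} (A : Matrix (Fin m) (Fin n) ℝ) : ℝ :=
  sSup {t : ℝ | ∃ x : Fin n → ℝ, _root_.enorm x ≤ 1 ∧ t = _root_.enorm (A.mulVec x)}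

noncomputable def lamMax {n : ℕ} (A : Matrix (Fin n) (Fin n) ℝ) : ℝ :=
  sSup (spectrum ℝ A)

structure SVD (m N : ℕ) (L : Matrix (Fin m) (Fin N) ℝ) where
  U : Matrix (Fin m) (Fin m) ℝ
  V : Matrix (Fin N) (Fin N) ℝ
  s : ℕ → ℝ
  hU : Uᵀ * U = 1
  hV : Vᵀ * V = 1
  hs_nonneg : ∀ j, 0 ≤ s j
  hs_anti : ∀ i j : ℕ, i ≤ j → s j ≤ s i
  hs_zero : ∀ j : ℕ, L.rank < j → s j = 0
  hL : L = U * (Matrix.of fun (i : Fin m) (j : Fin N) => if (i : ℕ) = (j : ℕ) then s ((i : ℕ) + 1) else 0) * Vᵀ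

def IsMoorePenrose {m N : ℕ} (L : Matrix (Fin m) (Fin N) ℝ)
    (Lp : Matrix (Fin N) (Fin m) ℝ) : Prop :=
  L * Lp * L = L ∧ Lp * L * Lp = Lp ∧ (L * Lp)ᵀ = L * Lp ∧ (Lp * L)ᵀ = Lp * L

def IsSelection {N r : ℕ} (S : Matrix (Fin N) (Fin r) ℝ) : Prop :=
  ∃ f : Fin r → Fin N, Function.Injective f ∧ S = Matrix.of fun i j => if i = f j then 1 else 0

/-!
For `y` put `x = V_k V_kᵀ L⁺ y`, so that `T y = H x`. In the right singular basis `V_k V_kᵀ`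
keeps the first `k` coordinates, so `‖L x‖ ≤ ‖L L⁺ y‖ ≤ ‖y‖`, the last step because `L L⁺` is an
orthogonal projection. Since `x ∈ 𝒱_k`, where `L` stretches by at least `σ_k`, also
`σ_k ‖x‖ ≤ ‖L x‖ ≤ ‖y‖`. The hypothesis then gives
`‖T y‖² ≤ τ ‖L x‖² + ε ‖x‖² ≤ (τ + ε σ_k⁻²) ‖y‖²`.
-/

section EuclideanNorm

variable {p q : ℕ}

lemma enorm_eq_sqrt_dotProduct (x : Fin p → ℝ) : _root_.enorm x = √(x ⬝ᵥ x) := by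
  simp only [_root_.enorm, dotProduct, sq]

lemma enorm_le_enorm_of_dotProduct_le {x : Fin p → ℝ} {y : Fin q → ℝ}
    (h : x ⬝ᵥ x ≤ y ⬝ᵥ y) : _root_.enorm x ≤ _root_.enorm y := by
  simpa only [enorm_eq_sqrt_dotProduct] using Real.sqrt_le_sqrt h

lemma enorm_mulVec_of_transpose_mul_self {A : Matrix (Fin p) (Fin q) ℝ} (hA : Aᵀ * A = 1)
    (v : Fin q → ℝ) : _root_.enorm (A *ᵥ v) = _root_.enorm v := by
  rw [enorm_eq_sqrt_dotProduct, enorm_eq_sqrt_dotProduct, dotProduct_mulVec, ← mulVec_transpose,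
    mulVec_mulVec, hA, one_mulVec, dotProduct_comm]

lemma enorm_mulVec_le_of_symm_of_idempotent {Q : Matrix (Fin p) (Fin p) ℝ} (hQ : Qᵀ = Q)
    (hQQ : Q * Q = Q) (y : Fin p → ℝ) : _root_.enorm (Q *ᵥ y) ≤ _root_.enorm y := by
  apply enorm_le_enorm_of_dotProduct_le
  have hQy : Q *ᵥ y ⬝ᵥ Q *ᵥ y = y ⬝ᵥ Q *ᵥ y := by
    rw [dotProduct_mulVec, ← mulVec_transpose, hQ, mulVec_mulVec, hQQ, dotProduct_comm]
  have h := dotProduct_self_star_nonneg (y - Q *ᵥ y)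
  simp only [star_trivial, sub_dotProduct, dotProduct_sub, dotProduct_comm (Q *ᵥ y) y] at h
  linarith

lemma opNorm_sq_le {A : Matrix (Fin p) (Fin q) ℝ} {c : ℝ} (hc : 0 ≤ c)
    (h : ∀ x, _root_.enorm (A *ᵥ x) ^ 2 ≤ c * _root_.enorm x ^ 2) : opNorm A ^ 2 ≤ c := by
  have hbound : opNorm A ≤ √c := by
    refine csSup_le ⟨_, 0, by simp [_root_.enorm], rfl⟩ ?_
    rintro _ ⟨x, hx, rfl⟩
    exact Real.le_sqrt_of_sq_le ((h x).trans
      (mul_le_of_le_one_right hc (pow_le_one₀ (Real.sqrt_nonneg _) hx)))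
  have hnonneg : 0 ≤ opNorm A :=
    Real.sSup_nonneg (by rintro _ ⟨x, -, rfl⟩; exact Real.sqrt_nonneg _)
  exact (pow_le_pow_left₀ hnonneg hbound 2).trans_eq (Real.sq_sqrt hc)

end EuclideanNorm

section RectDiag

variable {p q r : ℕ}

lemma sum_ite_val_eq (n : ℕ) (f : Fin q → ℝ) :
    ∑ l : Fin q, (if n = l then f l else 0) = if h : n < q then f ⟨n, h⟩ else 0 := by
  split_ifs with h
  · rw [Fintype.sum_eq_single ⟨n, h⟩ fun l hl => if_neg fun hnl => hl (Fin.ext hnl.symm),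
      if_pos rfl]
  · exact Finset.sum_eq_zero fun l _ => if_neg fun hnl : n = l => h (hnl ▸ l.isLt)

lemma sum_fin_le_sum_fin_of_nonneg {G : ℕ → ℝ} (hG : ∀ n, 0 ≤ G n)
    (hGq : ∀ n, q ≤ n → G n = 0) :
    ∑ i : Fin p, G i ≤ ∑ j : Fin q, G j := by
  rw [Fin.sum_univ_eq_sum_range G p, Fin.sum_univ_eq_sum_range G q]
  calc ∑ n ∈ Finset.range p, G n ≤ ∑ n ∈ Finset.range (max p q), G n :=
        Finset.sum_le_sum_of_subset_of_nonneg (Finset.range_subset_range.2 (le_max_left _ _))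
          fun n _ _ => hG n
    _ = ∑ n ∈ Finset.range q, G n :=
        (Finset.sum_subset (Finset.range_subset_range.2 (le_max_right _ _))
          fun n _ hn => hGq n (by simpa using hn)).symm

def rectDiag (p q : ℕ) (d : ℕ → ℝ) : Matrix (Fin p) (Fin q) ℝ :=
  of fun i j => if (i : ℕ) = j then d i else 0

lemma rectDiag_transpose (d : ℕ → ℝ) : (rectDiag p q d)ᵀ = rectDiag q p d := by
  ext i j
  by_cases h : (j : ℕ) = i
  · simp [rectDiag, h]
  · simp [rectDiag, h, Ne.symm h]

lemma rectDiag_mulVec_apply (d : ℕ → ℝ) (z : Fin q → ℝ) (i : Fin p) :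
    (rectDiag p q d *ᵥ z) i = if h : (i : ℕ) < q then d i * z ⟨i, h⟩ else 0 := by
  simp only [rectDiag, mulVec, dotProduct, of_apply, ite_mul, zero_mul, sum_ite_val_eq]

lemma rectDiag_mul (d₁ d₂ : ℕ → ℝ) :
    rectDiag p q d₁ * rectDiag q r d₂ =
      rectDiag p r fun n => if n < q then d₁ n * d₂ n else 0 := by
  ext i j
  simp only [rectDiag, mul_apply, of_apply, ite_mul, zero_mul, sum_ite_val_eq]
  split_ifs <;> simp_all

lemma enorm_rectDiag_mulVec_le_of_abs_le {d d' : ℕ → ℝ} (h : ∀ n, |d n| ≤ |d' n|)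
    (z : Fin q → ℝ) :
    _root_.enorm (rectDiag p q d *ᵥ z) ≤ _root_.enorm (rectDiag p q d' *ᵥ z) := by
  refine Real.sqrt_le_sqrt (Finset.sum_le_sum fun i _ => ?_)
  simp only [rectDiag_mulVec_apply]
  split_ifs
  · rw [mul_pow, mul_pow]
    exact mul_le_mul_of_nonneg_right (sq_le_sq.mpr (h i)) (sq_nonneg _)
  · rfl

lemma enorm_rectDiag_mulVec_le {d : ℕ → ℝ} {C : ℝ} (hC : ∀ n, |d n| ≤ C)
    (z : Fin q → ℝ) :
    _root_.enorm (rectDiag p q d *ᵥ z) ≤ C * _root_.enorm z := by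
  have hC0 : 0 ≤ C := (abs_nonneg _).trans (hC 0)
  set G : ℕ → ℝ := fun n => if h : n < q then (d n * z ⟨n, h⟩) ^ 2 else 0
  have hGnonneg : ∀ n, 0 ≤ G n := fun n => by
    simp only [G]
    split_ifs
    exacts [sq_nonneg _, le_rfl]
  have hsq : ∑ i : Fin p, (rectDiag p q d *ᵥ z) i ^ 2 ≤ C ^ 2 * ∑ j, z j ^ 2 := calc
    _ = ∑ i : Fin p, G i := Finset.sum_congr rfl fun i _ => by
      simp only [rectDiag_mulVec_apply, G]
      split_ifs <;> simp
    _ ≤ ∑ j : Fin q, G j :=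
      sum_fin_le_sum_fin_of_nonneg hGnonneg fun n hn => dif_neg (not_lt.mpr hn)
    _ ≤ C ^ 2 * ∑ j, z j ^ 2 := by
      rw [Finset.mul_sum]
      refine Finset.sum_le_sum fun j _ => ?_
      have hdC : d j ^ 2 ≤ C ^ 2 := by
        rw [← sq_abs]
        exact pow_le_pow_left₀ (abs_nonneg _) (hC j) 2
      simp only [G, dif_pos j.isLt, mul_pow]
      exact mul_le_mul_of_nonneg_right hdC (sq_nonneg _)
  calc _root_.enorm (rectDiag p q d *ᵥ z) ≤ √(C ^ 2 * ∑ j, z j ^ 2) := Real.sqrt_le_sqrt hsq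
    _ = C * _root_.enorm z := by rw [Real.sqrt_mul (sq_nonneg C), Real.sqrt_sq hC0]; rfl

end RectDiag

lemma enorm_mulVec_pinv_mulVec_le {m N : ℕ} {L : Matrix (Fin m) (Fin N) ℝ}
    {Lp : Matrix (Fin N) (Fin m) ℝ} (hLp : IsMoorePenrose L Lp) (y : Fin m → ℝ) :
    _root_.enorm (L *ᵥ (Lp *ᵥ y)) ≤ _root_.enorm y := by
  rw [mulVec_mulVec]
  refine enorm_mulVec_le_of_symm_of_idempotent hLp.2.2.1 ?_ y
  rw [← Matrix.mul_assoc, hLp.1]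

namespace SVD

variable {m N k : ℕ} {L : Matrix (Fin m) (Fin N) ℝ} (svd : SVD m N L)

def sigma : Matrix (Fin m) (Fin N) ℝ := rectDiag m N fun n => svd.s (n + 1)

def leadingV (hkN : k ≤ N) : Matrix (Fin N) (Fin k) ℝ := svd.V.submatrix id (Fin.castLE hkN)

def leadingProj (hkN : k ≤ N) : Matrix (Fin N) (Fin N) ℝ :=
  svd.leadingV hkN * (svd.leadingV hkN)ᵀ

lemma V_mul_transpose : svd.V * svd.Vᵀ = 1 := mul_eq_one_comm.mp svd.hV

lemma mulVec_V_mulVec (u : Fin N → ℝ) :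
    L *ᵥ (svd.V *ᵥ u) = svd.U *ᵥ (svd.sigma *ᵥ u) := by
  have hL : L = svd.U * svd.sigma * svd.Vᵀ := svd.hL
  calc L *ᵥ (svd.V *ᵥ u) = (svd.U * svd.sigma * svd.Vᵀ) *ᵥ (svd.V *ᵥ u) := by rw [← hL]
    _ = svd.U *ᵥ (svd.sigma *ᵥ u) := by
      simp only [mulVec_mulVec, Matrix.mul_assoc, svd.hV, Matrix.mul_one]

lemma enorm_mulVec_V_mulVec (u : Fin N → ℝ) :
    _root_.enorm (L *ᵥ (svd.V *ᵥ u)) = _root_.enorm (svd.sigma *ᵥ u) := by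
  rw [svd.mulVec_V_mulVec, enorm_mulVec_of_transpose_mul_self svd.hU]

lemma enorm_mulVec (z : Fin N → ℝ) :
    _root_.enorm (L *ᵥ z) = _root_.enorm (svd.sigma *ᵥ (svd.Vᵀ *ᵥ z)) := by
  have hz : svd.V *ᵥ (svd.Vᵀ *ᵥ z) = z := by
    rw [mulVec_mulVec, svd.V_mul_transpose, one_mulVec]
  rw [← svd.enorm_mulVec_V_mulVec, hz]

lemma leadingProj_eq (hkN : k ≤ N) :
    svd.leadingProj hkN =
      svd.V * rectDiag N N (fun n => if n < k then 1 else 0) * svd.Vᵀ := by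
  have hV : svd.leadingV hkN = svd.V * rectDiag N k 1 := by
    have h1 : (1 : Matrix (Fin N) (Fin N) ℝ).submatrix (Equiv.refl _) (Fin.castLE hkN) =
        rectDiag N k 1 := by
      ext i j
      simp [rectDiag, one_apply, Fin.ext_iff]
    rw [← h1, mul_submatrix_one]
    rfl
  rw [leadingProj, hV, Matrix.transpose_mul, rectDiag_transpose, Matrix.mul_assoc,
    ← Matrix.mul_assoc (rectDiag N k 1), rectDiag_mul, ← Matrix.mul_assoc]
  simp

lemma enorm_mulVec_leadingProj_mulVec_le (hkN : k ≤ N) (z : Fin N → ℝ) :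
    _root_.enorm (L *ᵥ (svd.leadingProj hkN *ᵥ z)) ≤ _root_.enorm (L *ᵥ z) := by
  rw [svd.leadingProj_eq, ← mulVec_mulVec, ← mulVec_mulVec, svd.enorm_mulVec_V_mulVec,
    svd.enorm_mulVec, mulVec_mulVec, sigma, rectDiag_mul]
  exact enorm_rectDiag_mulVec_le_of_abs_le (fun n => by split_ifs <;> simp) _

lemma s_mul_enorm_leadingProj_mulVec_le (hkN : k ≤ N) (hkm : k ≤ m) (hσ : 0 < svd.s k)
    (z : Fin N → ℝ) :
    svd.s k * _root_.enorm (svd.leadingProj hkN *ᵥ z) ≤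
      _root_.enorm (L *ᵥ (svd.leadingProj hkN *ᵥ z)) := by
  have hs_le : ∀ n < k, svd.s k ≤ svd.s (n + 1) := fun n hn => svd.hs_anti _ _ hn
  set P := rectDiag N N (fun n => if n < k then 1 else 0)
  -- a left inverse of `svd.sigma` on the first `k` coordinates, with entries at most `σ_k⁻¹`
  set sigmaInv := rectDiag N m (fun n => if n < k then (svd.s (n + 1))⁻¹ else 0)
  have hP : sigmaInv * svd.sigma * P = P := by
    rw [sigma, rectDiag_mul, rectDiag_mul]
    congr 1
    funext n
    by_cases hn : n < k
    · have hne : svd.s (n + 1) ≠ 0 := (hσ.trans_le (hs_le n hn)).ne'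
      simp [hn, hn.trans_le hkm, hn.trans_le hkN, hne]
    · simp [hn]
  set u := P *ᵥ (svd.Vᵀ *ᵥ z)
  have hx : svd.leadingProj hkN *ᵥ z = svd.V *ᵥ u := by
    rw [svd.leadingProj_eq, ← mulVec_mulVec, ← mulVec_mulVec]
  have hu : sigmaInv *ᵥ (svd.sigma *ᵥ u) = u := by
    simp only [u, mulVec_mulVec, ← Matrix.mul_assoc, hP]
  rw [hx, svd.enorm_mulVec_V_mulVec, enorm_mulVec_of_transpose_mul_self svd.hV,
    ← le_inv_mul_iff₀ hσ]
  calc _root_.enorm u = _root_.enorm (sigmaInv *ᵥ (svd.sigma *ᵥ u)) := congrArg _ hu.symm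
    _ ≤ (svd.s k)⁻¹ * _root_.enorm (svd.sigma *ᵥ u) := by
      refine enorm_rectDiag_mulVec_le (fun n => ?_) _
      split_ifs with hn
      · rw [abs_of_pos (inv_pos.mpr (hσ.trans_le (hs_le n hn)))]
        exact inv_anti₀ hσ (hs_le n hn)
      · simpa using hσ.le

end SVD

theorem stmt5 {M m N k : ℕ} (H : Matrix (Fin M) (Fin N) ℝ) (L : Matrix (Fin m) (Fin N) ℝ)
    (svd : SVD m N L) (hk : k ≤ L.rank) (hkN : k ≤ N) (hσk : 0 < svd.s k)
    (Lp : Matrix (Fin N) (Fin m) ℝ) (hLp : IsMoorePenrose L Lp)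
    (τ ε : ℝ) (hτ : 0 ≤ τ) (hε : 0 ≤ ε)
    (hτε : ∀ x : Fin N → ℝ,
      _root_.enorm (H.mulVec x) ^ 2 ≤ τ * _root_.enorm (L.mulVec x) ^ 2 + ε * _root_.enorm x ^ 2) :
    let Vk : Matrix (Fin N) (Fin k) ℝ := svd.V.submatrix id (Fin.castLE hkN)
    let T : Matrix (Fin M) (Fin m) ℝ := H * (Vk * Vkᵀ) * Lp
    opNorm T ^ 2 ≤ τ + ε * (svd.s k)⁻¹ ^ 2 := by
  intro Vk T
  have hkm : k ≤ m := hk.trans (L.rank_le_card_height.trans_eq (Fintype.card_fin m))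
  refine opNorm_sq_le (by positivity) fun y => ?_
  set x := svd.leadingProj hkN *ᵥ (Lp *ᵥ y)
  have hLx : _root_.enorm (L *ᵥ x) ≤ _root_.enorm y :=
    (svd.enorm_mulVec_leadingProj_mulVec_le hkN _).trans (enorm_mulVec_pinv_mulVec_le hLp y)
  have hx : _root_.enorm x ≤ (svd.s k)⁻¹ * _root_.enorm y := by
    rw [le_inv_mul_iff₀ hσk]
    exact (svd.s_mul_enorm_leadingProj_mulVec_le hkN hkm hσk _).trans hLx
  have hTy : T *ᵥ y = H *ᵥ x := by
    simp only [T, x, Vk, SVD.leadingProj, SVD.leadingV, mulVec_mulVec, Matrix.mul_assoc]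
  calc _root_.enorm (T *ᵥ y) ^ 2 = _root_.enorm (H *ᵥ x) ^ 2 := by rw [hTy]
    _ ≤ τ * _root_.enorm (L *ᵥ x) ^ 2 + ε * _root_.enorm x ^ 2 := hτε x
    _ ≤ τ * _root_.enorm y ^ 2 + ε * ((svd.s k)⁻¹ * _root_.enorm y) ^ 2 := by
      gcongr <;> exact Real.sqrt_nonneg _
    _ = (τ + ε * (svd.s k)⁻¹ ^ 2) * _root_.enorm y ^ 2 := by ring
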